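/- Let (Ω, 𝒜, μ) be a σ-finite measure space, u ∈ L^1(Ω), and K ∈ (0, μ(Ω)). Then the following are equivalent: (i) ‖u‖_0 ≤ K; (ii) ‖u‖_1 = |u|_K; (iii) |u|_H = |u|_K for all H ∈ (K, μ(Ω)]. Moreover each of these implies |u|_h = |u|_K for some h ∈ (K, μ(Ω)]. -/

import Mathlib

open MeasureTheory Set
open scoped ENNReal

/-- The largest-K-norm: `|u|_K = sup { ∫_A |u| dμ : A measurable, μ(A) ≤ K }`. -/
noncomputable def largestK {Ω : Type*} [MeasurableSpace Ω] (μ : Measure Ω) (K : ℝ≥0∞)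
    (u : Ω → ℝ) : ℝ :=
  sSup {r : ℝ | ∃ A : Set Ω, MeasurableSet A ∧ μ A ≤ K ∧ r = ∫ x in A, |u x| ∂μ}

/-!
If `μ(supp u) ≤ K`, a measurable hull of the support is admissible for `|u|_K` and already
carries all of `‖u‖₁`, so `|u|_K = ‖u‖₁`; as `H ↦ |u|_H` is monotone and bounded by `‖u‖₁`,
also `|u|_H = |u|_K` for every `H ≥ K`. Conversely, if `μ(supp u) > K`, continuity from below
gives a level `c > 0` whose superlevel set `E = {|u| > c}` still has `K < μ(E) < ∞`. Removing
from `|u| - c` its negative part and adding its positive part shows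
`∫_A (|u| - c) ≤ ∫_E (|u| - c)` for every `A`, so every admissible `A` for `|u|_K` falls short
of `∫_E |u| ≤ |u|_{μ(E)}` by at least `c (μ(E) - K) > 0`.
-/

section LargestK

variable {Ω : Type*} [MeasurableSpace Ω] {μ : Measure Ω} {u : Ω → ℝ} {K H : ℝ≥0∞}

lemma largestK_bddAbove (hu : Integrable u μ) :
    BddAbove {r : ℝ | ∃ A : Set Ω, MeasurableSet A ∧ μ A ≤ K ∧ r = ∫ x in A, |u x| ∂μ} := by
  refine ⟨∫ x, |u x| ∂μ, ?_⟩
  rintro r ⟨A, -, -, rfl⟩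
  exact setIntegral_le_integral hu.abs (.of_forall fun x => abs_nonneg _)

lemma le_largestK (hu : Integrable u μ) {A : Set Ω} (hA : MeasurableSet A) (hAK : μ A ≤ K) :
    ∫ x in A, |u x| ∂μ ≤ largestK μ K u :=
  le_csSup (largestK_bddAbove hu) ⟨A, hA, hAK, rfl⟩

lemma largestK_le {r : ℝ}
    (h : ∀ A : Set Ω, MeasurableSet A → μ A ≤ K → ∫ x in A, |u x| ∂μ ≤ r) :
    largestK μ K u ≤ r := by
  refine csSup_le ⟨0, ∅, .empty, by simp, by simp⟩ ?_
  rintro s ⟨A, hA, hAK, rfl⟩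
  exact h A hA hAK

lemma largestK_le_integral (hu : Integrable u μ) : largestK μ K u ≤ ∫ x, |u x| ∂μ :=
  largestK_le fun _ _ _ => setIntegral_le_integral hu.abs (.of_forall fun _ => abs_nonneg _)

lemma largestK_mono (hu : Integrable u μ) (hKH : K ≤ H) : largestK μ K u ≤ largestK μ H u :=
  largestK_le fun _ hA hAK => le_largestK hu hA (hAK.trans hKH)

lemma largestK_congr_ae {v : Ω → ℝ} (huv : u =ᵐ[μ] v) : largestK μ K u = largestK μ K v := by
  have hint : ∀ A : Set Ω, ∫ x in A, |u x| ∂μ = ∫ x in A, |v x| ∂μ := fun A =>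
    integral_congr_ae (ae_restrict_of_ae (huv.mono fun x hx => congrArg abs hx))
  simp only [largestK, hint]

theorem integral_abs_eq_largestK_of_measure_support_le (hu : Integrable u μ)
    (h : μ (Function.support u) ≤ K) : ∫ x, |u x| ∂μ = largestK μ K u := by
  set B := toMeasurable μ (Function.support u)
  have hB : ∫ x in B, |u x| ∂μ = ∫ x, |u x| ∂μ :=
    setIntegral_eq_integral_of_forall_compl_eq_zero fun x hx => by
      rw [Function.notMem_support.mp fun hx' => hx (subset_toMeasurable μ _ hx'), abs_zero]
  refine le_antisymm ?_ (largestK_le_integral hu)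
  rw [← hB]
  exact le_largestK hu (measurableSet_toMeasurable μ _) ((measure_toMeasurable _).trans_le h)

theorem exists_lt_measure_abs_gt_of_lt_measure_support {f : Ω → ℝ}
    (hK : K < μ (Function.support f)) : ∃ c : ℝ, 0 < c ∧ K < μ {x | c < |f x|} := by
  set E : ℕ → Set Ω := fun n => {x | 1 / ((n : ℝ) + 1) < |f x|}
  have hE_mono : Monotone E := fun n m hnm x (hx : 1 / ((n : ℝ) + 1) < |f x|) =>
    show 1 / ((m : ℝ) + 1) < |f x| from (Nat.one_div_le_one_div hnm).trans_lt hx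
  have hE_iUnion : ⋃ n, E n = Function.support f := by
    ext x
    simp only [E, mem_iUnion, mem_ofPred_eq, Function.mem_support]
    refine ⟨fun ⟨n, hn⟩ hx => ?_, fun hx => exists_nat_one_div_lt (abs_pos.mpr hx)⟩
    rw [hx, abs_zero] at hn
    exact hn.not_ge Nat.one_div_pos_of_nat.le
  rw [← hE_iUnion, hE_mono.measure_iUnion, lt_iSup_iff] at hK
  obtain ⟨n, hn⟩ := hK
  exact ⟨_, Nat.one_div_pos_of_nat, hn⟩

theorem setIntegral_sub_const_le_of_superlevel {g : Ω → ℝ} {c : ℝ} {A E : Set Ω}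
    (hA : MeasurableSet A) (hE : MeasurableSet E) (hμA : μ A ≠ ∞) (hμE : μ E ≠ ∞)
    (hgA : IntegrableOn g A μ) (hgE : IntegrableOn g E μ)
    (hg_mem : ∀ x ∈ E, c ≤ g x) (hg_notMem : ∀ x ∉ E, g x ≤ c) :
    ∫ x in A, (g x - c) ∂μ ≤ ∫ x in E, (g x - c) ∂μ := by
  have hint : ∀ s, MeasurableSet s → μ s ≠ ∞ → IntegrableOn g s μ →
      Integrable (s.indicator fun x => g x - c) μ := fun s hs hμs hgs =>
    (hgs.sub (integrableOn_const hμs)).integrable_indicator hs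
  rw [← integral_indicator hA, ← integral_indicator hE]
  refine integral_mono (hint A hA hμA hgA) (hint E hE hμE hgE) fun x => ?_
  by_cases hxE : x ∈ E <;> by_cases hxA : x ∈ A <;>
    simp [hxE, hxA, hg_mem x, hg_notMem x]

theorem largestK_lt_largestK_measure_abs_gt {f : Ω → ℝ} (hf : Integrable f μ)
    (hf_meas : Measurable f) (hK : K ≠ ∞) {c : ℝ} (hc : 0 < c)
    (hKE : K < μ {x | c < |f x|}) : largestK μ K f < largestK μ (μ {x | c < |f x|}) f := by
  set E := {x | c < |f x|}
  have hE : MeasurableSet E := measurableSet_lt measurable_const hf_meas.abs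
  have hμE : μ E ≠ ∞ := hf.abs.measure_gt_lt_top hc |>.ne
  have hgap : 0 < c * (μ.real E - K.toReal) :=
    mul_pos hc (sub_pos.mpr ((ENNReal.toReal_lt_toReal hK hμE).mpr hKE))
  suffices largestK μ K f ≤ ∫ x in E, |f x| ∂μ - c * (μ.real E - K.toReal) by
    linarith [le_largestK hf hE le_rfl (K := μ E)]
  refine largestK_le fun A hA hAK => ?_
  have hμA : μ A ≠ ∞ := ne_top_of_le_ne_top hK hAK
  have hsub := setIntegral_sub_const_le_of_superlevel hA hE hμA hμE hf.abs.integrableOn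
    hf.abs.integrableOn (fun _ hx => le_of_lt hx) (fun _ hx => not_lt.mp hx)
  rw [integral_sub hf.abs.integrableOn (integrableOn_const hμA),
    integral_sub hf.abs.integrableOn (integrableOn_const hμE), setIntegral_const,
    setIntegral_const, smul_eq_mul, smul_eq_mul] at hsub
  have hAK' : c * μ.real A ≤ c * K.toReal :=
    mul_le_mul_of_nonneg_left (ENNReal.toReal_mono hK hAK) hc.le
  linarith

theorem exists_largestK_lt_of_lt_measure_support (hu : Integrable u μ) (hK : K ≠ ∞)
    (h : K < μ (Function.support u)) :
    ∃ H, K < H ∧ H ≤ μ (Function.support u) ∧ largestK μ K u < largestK μ H u := by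
  set f := hu.1.mk u
  have hf_meas : Measurable f := hu.1.stronglyMeasurable_mk.measurable
  have huf : u =ᵐ[μ] f := hu.1.ae_eq_mk
  have hsupp : μ (Function.support u) = μ (Function.support f) :=
    measure_congr (huf.mono fun x hx => congrArg (· ≠ 0) hx)
  rw [hsupp] at h ⊢
  obtain ⟨c, hc, hKE⟩ := exists_lt_measure_abs_gt_of_lt_measure_support h
  refine ⟨_, hKE, measure_mono fun x hx => abs_pos.mp (hc.trans hx), ?_⟩
  rw [largestK_congr_ae huf, largestK_congr_ae huf]
  exact largestK_lt_largestK_measure_abs_gt (hu.congr huf) hf_meas hK hc hKE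

end LargestK

theorem stmt15_general {Ω : Type*} [MeasurableSpace Ω] (μ : Measure Ω)
    (u : Ω → ℝ) (hu : Integrable u μ)
    (K : ℝ≥0∞) (hK : K < μ Set.univ) :
    List.TFAE
      [μ (Function.support u) ≤ K,
       (∫ x, |u x| ∂μ) = largestK μ K u,
       ∀ H : ℝ≥0∞, K < H → H ≤ μ Set.univ → largestK μ H u = largestK μ K u] ∧
    (μ (Function.support u) ≤ K →
      ∃ h : ℝ≥0∞, K < h ∧ h ≤ μ Set.univ ∧ largestK μ h u = largestK μ K u) := by
  have htfae : List.TFAE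
      [μ (Function.support u) ≤ K,
       (∫ x, |u x| ∂μ) = largestK μ K u,
       ∀ H : ℝ≥0∞, K < H → H ≤ μ Set.univ → largestK μ H u = largestK μ K u] := by
    tfae_have 1 → 2 := integral_abs_eq_largestK_of_measure_support_le hu
    tfae_have 2 → 3 := fun h H hKH _ =>
      le_antisymm (h ▸ largestK_le_integral hu) (largestK_mono hu hKH.le)
    tfae_have 3 → 1 := by
      intro h
      by_contra! hsupp
      obtain ⟨H, hKH, hH, hlt⟩ := exists_largestK_lt_of_lt_measure_support hu hK.ne_top hsupp
      exact hlt.ne' (h H hKH (hH.trans (measure_mono (subset_univ _))))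
    tfae_finish
  have h13 := htfae.out 0 2
  exact ⟨htfae, fun h => ⟨μ univ, hK, le_rfl, h13.mp h _ hK le_rfl⟩⟩

/-- for a general σ-finite measure space (no atom-freeness assumed), TFAE:
(i) `‖u‖₀ = μ(supp u) ≤ K`; (ii) `‖u‖₁ = |u|_K`; (iii) `|u|_H = |u|_K` for all
`H ∈ (K, μ(Ω)]`; moreover each of these implies `|u|_h = |u|_K` for some `h ∈ (K, μ(Ω)]`. -/
theorem stmt15 {Ω : Type*} [MeasurableSpace Ω] (μ : Measure Ω) [SigmaFinite μ]
    (u : Ω → ℝ) (hu : Integrable u μ)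
    (K : ℝ≥0∞) (hK0 : 0 < K) (hK : K < μ Set.univ) :
    List.TFAE
      [μ (Function.support u) ≤ K,
       (∫ x, |u x| ∂μ) = largestK μ K u,
       ∀ H : ℝ≥0∞, K < H → H ≤ μ Set.univ → largestK μ H u = largestK μ K u] ∧
    (μ (Function.support u) ≤ K →
      ∃ h : ℝ≥0∞, K < h ∧ h ≤ μ Set.univ ∧ largestK μ h u = largestK μ K u) :=
  stmt15_general μ u hu K hK
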